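/- Let S ⊆ G∖{1} be symmetric (g ∈ S ⟹ g⁻¹ ∈ S) and define σ_S(x,y) = 0 if {x, y, xy} ∩ S ≠ ∅ and σ_S(x,y) = 1 otherwise. Then σ_S is a factor set of G; moreover for ξ containing 1, ξ ∉ Ω_{σ_S} if and only if there exist h ∈ G and g ∈ S with {h, hg} ⊆ ξ, and for ξ ∈ Ω_{σ_S} the complement of the admissible set A_{σ_S}(ξ) equals { xg : x ∈ ξ, g ∈ S }. -/

import Mathlib

def IsPartialProjRep {κ G : Type} [Field κ] [Group G] (σ : G → G → κ)
    (R : Type) [Ring R] [Algebra κ R] (Γ : G → R) : Prop :=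
  Γ 1 = 1 ∧
  (∀ g h : G, σ g h = 0 → Γ g⁻¹ * Γ (g * h) = 0 ∧ Γ (g * h) * Γ h⁻¹ = 0) ∧
  (∀ g h : G, Γ g * Γ h = 0 → σ g h = 0) ∧
  (∀ g h : G, Γ g⁻¹ * Γ g * Γ h = σ g h • (Γ g⁻¹ * Γ (g * h))) ∧
  (∀ g h : G, Γ g * Γ h * Γ h⁻¹ = σ g h • (Γ (g * h) * Γ h⁻¹))

/-- `σ` is a factor set of some partial projective representation of `G`. -/
def IsFactorSet {κ G : Type} [Field κ] [Group G] (σ : G → G → κ) : Prop :=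
  ∃ (R : Type) (_ : Ring R) (_ : Algebra κ R) (Γ : G → R), IsPartialProjRep σ R Γ
/-- σ-prohibitions of type I: sets `{h, hg, hgs}` with `σ(g,s) = 0`. -/
def ProhibitionI {κ G : Type} [Field κ] [Group G] (σ : G → G → κ) : Set (Set G) :=
  {V | ∃ h g s : G, σ g s = 0 ∧ V = {h, h * g, h * g * s}}

/-- σ-prohibitions of type II: sets `{h, hg, hgs, hgst}` with
`σ(g,st)σ(s,t) ≠ σ(g,s)σ(gs,t)`. -/
def ProhibitionII {κ G : Type} [Field κ] [Group G] (σ : G → G → κ) : Set (Set G) :=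
  {V | ∃ h g s t : G,
    σ g (s * t) * σ s t ≠ σ g s * σ (g * s) t ∧ V = {h, h * g, h * g * s, h * g * s * t}}

/-- `Ω_σ`: subsets of `G` containing `1` and containing no σ-prohibition. -/
def Omega {κ G : Type} [Field κ] [Group G] (σ : G → G → κ) : Set (Set G) :=
  {ξ | (1 : G) ∈ ξ ∧ ∀ V ∈ ProhibitionI σ ∪ ProhibitionII σ, ¬ V ⊆ ξ}

/-- The set `A_σ(ξ)` of admissible elements for `ξ`. -/
def Adm {κ G : Type} [Field κ] [Group G] (σ : G → G → κ) (ξ : Set G) : Set G :=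
  {g | g ∉ ξ ∧ ξ ∪ {g} ∈ Omega σ}

open scoped Classical in
/-- The diagonal factor set generated by a symmetric set `S ⊆ G \ {1}`:
`σ_S(x,y) = 0` iff `{x, y, xy} ∩ S ≠ ∅`, and `1` otherwise. -/
noncomputable def sigmaDiag {κ G : Type} [Field κ] [Group G] (S : Set G) (x y : G) : κ :=
  if ({x, y, x * y} : Set G) ∩ S = ∅ then 1 else 0

/-!
For any `σ`, left translation `ξ ↦ g • ξ` (defined when `g⁻¹ ∈ ξ`) is a partial action of `G`
on `Ω_σ`, because the prohibitions are translation invariant. Its linearisation `Γ` on the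
space with basis `Ω_σ` satisfies the partial representation identities, and `Γ_{g⁻¹} Γ_{gh}`,
`Γ_{gh} Γ_{h⁻¹}` vanish when `σ(g,h) = 0`, since a basis vector surviving them would lie in a
prohibition `{x, xg, xgh}`. So a `{0,1}`-valued `σ` is a factor set as soon as
`{1, g, gh} ∈ Ω_σ` whenever `σ(g,h) ≠ 0`.

For `σ_S`, a set `ξ ∋ 1` lies in `Ω_{σ_S}` exactly when `x⁻¹ y ∉ S` for all `x, y ∈ ξ`: the
values `g, s, gs` deciding `σ_S(g,s)` are the quotients of the points `h, hg, hgs`. This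
description gives `{1, g, gh} ∈ Ω_{σ_S}` when `σ_S(g,h) ≠ 0`, as well as the other two claims.
-/

open scoped Pointwise

section Omega

variable {κ G : Type} [Field κ] [Group G] {σ : G → G → κ} {ξ : Set G}

lemma sigma_ne_zero_of_mem_omega (hξ : ξ ∈ Omega σ) {x g s : G} (hx : x ∈ ξ)
    (hxg : x * g ∈ ξ) (hxgs : x * g * s ∈ ξ) : σ g s ≠ 0 := fun hσ =>
  hξ.2 _ (Or.inl ⟨x, g, s, hσ, rfl⟩) (by simp [Set.insert_subset_iff, *])

lemma smul_mem_prohibitionI {V : Set G} (hV : V ∈ ProhibitionI σ) (a : G) :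
    a • V ∈ ProhibitionI σ := by
  obtain ⟨h, g, s, hσ, rfl⟩ := hV
  exact ⟨a * h, g, s, hσ, by simp [Set.smul_set_insert, mul_assoc]⟩

lemma smul_mem_prohibitionII {V : Set G} (hV : V ∈ ProhibitionII σ) (a : G) :
    a • V ∈ ProhibitionII σ := by
  obtain ⟨h, g, s, t, hσ, rfl⟩ := hV
  exact ⟨a * h, g, s, t, hσ, by simp [Set.smul_set_insert, mul_assoc]⟩

lemma smul_mem_omega (hξ : ξ ∈ Omega σ) {g : G} (hg : g⁻¹ ∈ ξ) : g • ξ ∈ Omega σ := by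
  refine ⟨Set.mem_smul_set_iff_inv_smul_mem.2 (by simpa using hg), fun V hV hVξ => ?_⟩
  rw [Set.subset_smul_set_iff] at hVξ
  exact hξ.2 _ (hV.imp (smul_mem_prohibitionI · _) (smul_mem_prohibitionII · _)) hVξ

end Omega

section PartialShift

variable {κ G : Type} [Field κ] [Group G] (σ : G → G → κ)

-- Extended by zero off `Ω_σ`, so that `partialShift` needs no membership proof.
open scoped Classical in
noncomputable def omegaSingle (η : Set G) : κ →ₗ[κ] (Omega σ →₀ κ) :=
  if h : η ∈ Omega σ then Finsupp.lsingle ⟨η, h⟩ else 0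

open scoped Classical in
noncomputable def partialShift (g : G) : Module.End κ (Omega σ →₀ κ) :=
  Finsupp.lsum κ fun ξ => if g⁻¹ ∈ (ξ : Set G) then omegaSingle σ (g • (ξ : Set G)) else 0

variable {σ}

lemma omegaSingle_of_mem {η : Set G} (hη : η ∈ Omega σ) (c : κ) :
    omegaSingle σ η c = Finsupp.single ⟨η, hη⟩ c := by
  simp [omegaSingle, hη]

lemma omegaSingle_ne_zero {η : Set G} (hη : η ∈ Omega σ) {c : κ} (hc : c ≠ 0) :
    omegaSingle σ η c ≠ 0 := by
  simpa [omegaSingle_of_mem hη] using hc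

open scoped Classical in
lemma partialShift_single (g : G) (ξ : Omega σ) (c : κ) :
    partialShift σ g (Finsupp.single ξ c) =
      if g⁻¹ ∈ (ξ : Set G) then omegaSingle σ (g • (ξ : Set G)) c else 0 := by
  simp only [partialShift, Finsupp.lsum_single]
  split_ifs <;> rfl

open scoped Classical in
lemma partialShift_mul_single (a b : G) (ξ : Omega σ) (c : κ) :
    (partialShift σ a * partialShift σ b) (Finsupp.single ξ c) =
      if b⁻¹ ∈ (ξ : Set G) ∧ (a * b)⁻¹ ∈ (ξ : Set G) then
        omegaSingle σ ((a * b) • (ξ : Set G)) c else 0 := by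
  rw [Module.End.mul_apply, partialShift_single]
  by_cases hb : b⁻¹ ∈ (ξ : Set G)
  · rw [if_pos hb, omegaSingle_of_mem (smul_mem_omega ξ.2 hb), partialShift_single]
    simp [Set.mem_smul_set_iff_inv_smul_mem, smul_smul, hb]
  · simp [hb]

open scoped Classical in
lemma partialShift_mul_mul_single (a b d : G) (ξ : Omega σ) (c : κ) :
    (partialShift σ a * partialShift σ b * partialShift σ d) (Finsupp.single ξ c) =
      if d⁻¹ ∈ (ξ : Set G) ∧ (b * d)⁻¹ ∈ (ξ : Set G) ∧ (a * b * d)⁻¹ ∈ (ξ : Set G) then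
        omegaSingle σ ((a * b * d) • (ξ : Set G)) c else 0 := by
  rw [Module.End.mul_apply, partialShift_single]
  by_cases hd : d⁻¹ ∈ (ξ : Set G)
  · rw [if_pos hd, omegaSingle_of_mem (smul_mem_omega ξ.2 hd), partialShift_mul_single]
    simp [Set.mem_smul_set_iff_inv_smul_mem, smul_smul, mul_assoc, hd]
  · simp [hd]

lemma partialShift_one : partialShift σ (1 : G) = 1 :=
  Finsupp.lhom_ext fun ξ c => by
    simp [partialShift_single, ξ.2.1, omegaSingle_of_mem ξ.2]

lemma partialShift_inv_mul_mul (g h : G) :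
    partialShift σ g⁻¹ * partialShift σ g * partialShift σ h =
      partialShift σ g⁻¹ * partialShift σ (g * h) :=
  Finsupp.lhom_ext fun ξ c => by
    rw [partialShift_mul_mul_single, partialShift_mul_single]
    classical exact if_congr (by simp) (by simp) rfl

lemma partialShift_mul_mul_inv (g h : G) :
    partialShift σ g * partialShift σ h * partialShift σ h⁻¹ =
      partialShift σ (g * h) * partialShift σ h⁻¹ :=
  Finsupp.lhom_ext fun ξ c => by
    rw [partialShift_mul_mul_single, partialShift_mul_single]
    classical exact if_congr (by simp [ξ.2.1]) (by simp) rfl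

lemma partialShift_inv_mul_mul_eq_zero {g h : G} (hσ : σ g h = 0) :
    partialShift σ g⁻¹ * partialShift σ (g * h) = 0 :=
  Finsupp.lhom_ext fun ξ c => by
    rw [partialShift_mul_single, if_neg, LinearMap.zero_apply]
    rintro ⟨hgh, hh⟩
    exact sigma_ne_zero_of_mem_omega ξ.2 hgh (by simpa using hh) (by simpa using ξ.2.1) hσ

lemma partialShift_mul_mul_inv_eq_zero {g h : G} (hσ : σ g h = 0) :
    partialShift σ (g * h) * partialShift σ h⁻¹ = 0 :=
  Finsupp.lhom_ext fun ξ c => by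
    rw [partialShift_mul_single, if_neg, LinearMap.zero_apply]
    rintro ⟨hh, hg⟩
    exact sigma_ne_zero_of_mem_omega ξ.2 (by simpa using hg) (by simpa using ξ.2.1)
      (by simpa using hh) hσ

lemma sigma_eq_zero_of_partialShift_mul_eq_zero {g h : G}
    (hΩ : σ g h ≠ 0 → {1, g, g * h} ∈ Omega σ)
    (hgh : partialShift σ g * partialShift σ h = 0) : σ g h = 0 := by
  by_contra hσ
  have hξ := smul_mem_omega (g := (g * h)⁻¹) (hΩ hσ) (by simp)
  have := congr($hgh (Finsupp.single ⟨_, hξ⟩ (1 : κ)))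
  rw [partialShift_mul_single, if_pos (by simp [Set.mem_smul_set_iff_inv_smul_mem])] at this
  exact omegaSingle_ne_zero (smul_mem_omega hξ (by simp [Set.mem_smul_set_iff_inv_smul_mem]))
    one_ne_zero this

theorem isFactorSet_of_mem_omega (h01 : ∀ g h, σ g h = 0 ∨ σ g h = 1)
    (hΩ : ∀ g h, σ g h ≠ 0 → {1, g, g * h} ∈ Omega σ) : IsFactorSet σ := by
  refine ⟨Module.End κ (Omega σ →₀ κ), inferInstance, inferInstance, partialShift σ,
    partialShift_one, fun g h hσ => ⟨partialShift_inv_mul_mul_eq_zero hσ,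
      partialShift_mul_mul_inv_eq_zero hσ⟩,
    fun g h => sigma_eq_zero_of_partialShift_mul_eq_zero (hΩ g h), fun g h => ?_, fun g h => ?_⟩
  · rw [partialShift_inv_mul_mul]
    rcases h01 g h with hσ | hσ
    · rw [hσ, partialShift_inv_mul_mul_eq_zero hσ, smul_zero]
    · rw [hσ, one_smul]
  · rw [partialShift_mul_mul_inv]
    rcases h01 g h with hσ | hσ
    · rw [hσ, partialShift_mul_mul_inv_eq_zero hσ, smul_zero]
    · rw [hσ, one_smul]

end PartialShift

section SigmaDiag

variable {κ G : Type} [Field κ] [Group G] {S : Set G}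

lemma inv_mem_iff_of_forall_inv_mem (hSsym : ∀ g ∈ S, g⁻¹ ∈ S) (g : G) : g⁻¹ ∈ S ↔ g ∈ S :=
  ⟨fun h => by simpa using hSsym _ h, hSsym g⟩

open scoped Classical in
lemma sigmaDiag_apply (x y : G) :
    sigmaDiag (κ := κ) S x y = if x ∈ S ∨ y ∈ S ∨ x * y ∈ S then 0 else 1 := by
  simp only [sigmaDiag, Set.eq_empty_iff_forall_notMem, Set.mem_inter_iff,
    Set.mem_insert_iff, Set.mem_singleton_iff]
  exact if_congr (by aesop) rfl rfl |>.trans (ite_not _ _ _)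

lemma sigmaDiag_eq_zero_iff {x y : G} :
    sigmaDiag (κ := κ) S x y = 0 ↔ x ∈ S ∨ y ∈ S ∨ x * y ∈ S := by
  classical
  rw [sigmaDiag_apply]
  split_ifs <;> simp_all

lemma sigmaDiag_eq_one_of_mem {ξ : Set G} (hξ : ∀ x ∈ ξ, ∀ y ∈ ξ, x⁻¹ * y ∉ S) {x g s : G}
    (hx : x ∈ ξ) (hxg : x * g ∈ ξ) (hxgs : x * g * s ∈ ξ) : sigmaDiag (κ := κ) S g s = 1 := by
  have hg : g ∉ S := by simpa using hξ _ hx _ hxg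
  have hs : s ∉ S := by simpa [mul_assoc] using hξ _ hxg _ hxgs
  have hgs : g * s ∉ S := by simpa [mul_assoc] using hξ _ hx _ hxgs
  simp [sigmaDiag_apply, hg, hs, hgs]

lemma mem_omega_sigmaDiag_iff {ξ : Set G} :
    ξ ∈ Omega (sigmaDiag (κ := κ) S) ↔ 1 ∈ ξ ∧ ∀ x ∈ ξ, ∀ y ∈ ξ, x⁻¹ * y ∉ S := by
  refine ⟨fun hξ => ⟨hξ.1, fun x hx y hy hxy => ?_⟩, fun ⟨h1, hξ⟩ => ⟨h1, ?_⟩⟩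
  · refine sigma_ne_zero_of_mem_omega (g := x⁻¹ * y) (s := 1) hξ hx (by simpa) (by simpa) ?_
    exact sigmaDiag_eq_zero_iff.2 (Or.inl hxy)
  · rintro V (⟨h, g, s, hσ, rfl⟩ | ⟨h, g, s, t, hσ, rfl⟩) hV <;>
      simp only [Set.insert_subset_iff, Set.singleton_subset_iff] at hV
    · exact one_ne_zero ((sigmaDiag_eq_one_of_mem hξ hV.1 hV.2.1 hV.2.2).symm.trans hσ)
    · obtain ⟨h0, h1, h2, h3⟩ := hV
      refine hσ ?_
      rw [sigmaDiag_eq_one_of_mem hξ h0 h1 (by rwa [← mul_assoc]),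
        sigmaDiag_eq_one_of_mem hξ h1 h2 h3, sigmaDiag_eq_one_of_mem hξ h0 h1 h2,
        sigmaDiag_eq_one_of_mem hξ h0 (by rwa [← mul_assoc]) (by rwa [← mul_assoc])]

lemma notMem_omega_sigmaDiag_iff {ξ : Set G} (h1 : (1 : G) ∈ ξ) :
    ξ ∉ Omega (sigmaDiag (κ := κ) S) ↔ ∃ h : G, ∃ g ∈ S, {h, h * g} ⊆ ξ := by
  simp only [mem_omega_sigmaDiag_iff, h1, true_and, not_forall, not_not,
    Set.insert_subset_iff, Set.singleton_subset_iff]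
  constructor
  · rintro ⟨x, hx, y, hy, hxy⟩
    exact ⟨x, _, hxy, hx, by simpa⟩
  · rintro ⟨h, g, hg, hh, hhg⟩
    exact ⟨h, hh, _, hhg, by simpa⟩

lemma union_singleton_mem_omega_sigmaDiag_iff (hS1 : (1 : G) ∉ S)
    (hSsym : ∀ g ∈ S, g⁻¹ ∈ S) {ξ : Set G} (hξ : ξ ∈ Omega (sigmaDiag (κ := κ) S)) (y : G) :
    ξ ∪ {y} ∈ Omega (sigmaDiag (κ := κ) S) ↔ ∀ x ∈ ξ, x⁻¹ * y ∉ S := by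
  rw [mem_omega_sigmaDiag_iff] at hξ ⊢
  simp only [Set.union_singleton, Set.mem_insert_iff, forall_eq_or_imp, inv_mul_cancel,
    hS1, not_false_eq_true, true_and, hξ.1, or_true]
  have hswap (a : G) : y⁻¹ * a ∈ S ↔ a⁻¹ * y ∈ S := by
    rw [← inv_mem_iff_of_forall_inv_mem hSsym]; simp
  simp only [hswap]
  exact ⟨fun h => h.1, fun h => ⟨h, fun a ha => ⟨h a ha, hξ.2 a ha⟩⟩⟩

lemma compl_adm_sigmaDiag (hS1 : (1 : G) ∉ S) (hSsym : ∀ g ∈ S, g⁻¹ ∈ S) {ξ : Set G}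
    (hξ : ξ ∈ Omega (sigmaDiag (κ := κ) S)) :
    {y : G | y ∉ ξ ∧ y ∉ Adm (sigmaDiag (κ := κ) S) ξ} =
      {y : G | ∃ x ∈ ξ, ∃ g ∈ S, y = x * g} := by
  ext y
  simp only [Adm, Set.mem_ofPred_eq, union_singleton_mem_omega_sigmaDiag_iff hS1 hSsym hξ,
    not_and, not_forall, not_not]
  constructor
  · rintro ⟨hyξ, hy⟩
    obtain ⟨x, hx, hxy⟩ := hy hyξ
    exact ⟨x, hx, _, hxy, by simp⟩
  · rintro ⟨x, hx, g, hg, rfl⟩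
    have hxg : x * g ∉ ξ := fun hxg => mem_omega_sigmaDiag_iff.1 hξ |>.2 x hx _ hxg (by simpa)
    exact ⟨hxg, fun _ => ⟨x, hx, by simpa⟩⟩

lemma isFactorSet_sigmaDiag (hS1 : (1 : G) ∉ S) (hSsym : ∀ g ∈ S, g⁻¹ ∈ S) :
    IsFactorSet (sigmaDiag (κ := κ) S) := by
  refine isFactorSet_of_mem_omega (fun g h => ?_) (fun g h hσ => ?_)
  · rw [sigmaDiag_apply]
    split_ifs <;> simp
  · have hS := mt sigmaDiag_eq_zero_iff.2 hσ
    simp only [not_or] at hS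
    refine mem_omega_sigmaDiag_iff.2 ⟨by simp, ?_⟩
    simp [inv_mem_iff_of_forall_inv_mem hSsym, hS1, hS, mul_assoc]

end SigmaDiag

/-- For symmetric `S ⊆ G \ {1}`: `σ_S` is a factor set of `G`; a set `ξ ∋ 1` fails to
be in `Ω_{σ_S}` iff it contains some `{h, hg}` with `g ∈ S`; and for `ξ ∈ Ω_{σ_S}` the
complement (inside `G \ ξ`) of the admissible set `A_{σ_S}(ξ)` equals
`{xg : x ∈ ξ, g ∈ S}`. -/
theorem stmt_19 {κ G : Type} [Field κ] [Group G]
    (S : Set G) (hS1 : (1 : G) ∉ S) (hSsym : ∀ g ∈ S, g⁻¹ ∈ S) :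
    IsFactorSet (sigmaDiag (κ := κ) S) ∧
    (∀ ξ : Set G, (1 : G) ∈ ξ →
      (ξ ∉ Omega (sigmaDiag (κ := κ) S) ↔ ∃ h : G, ∃ g ∈ S, {h, h * g} ⊆ ξ)) ∧
    (∀ ξ ∈ Omega (sigmaDiag (κ := κ) S),
      {y : G | y ∉ ξ ∧ y ∉ Adm (sigmaDiag (κ := κ) S) ξ}
        = {y : G | ∃ x ∈ ξ, ∃ g ∈ S, y = x * g}) :=
  ⟨isFactorSet_sigmaDiag hS1 hSsym, fun _ h1 => notMem_omega_sigmaDiag_iff h1,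
    fun _ hξ => compl_adm_sigmaDiag hS1 hSsym hξ⟩
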